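/- For every X ∈ F, ⟨Γ₊(X) | V₊(X)⟩ ≤ n₊(X) · ‖V₊(X)^{1/4} Γ₊(X) V₊(X)^{1/4}‖_F and ⟨−Γ₋(X) | V₋(X)⟩ ≤ n₋(X) · ‖V₋(X)^{1/4} Γ₋(X) V₋(X)^{1/4}‖_F. -/

import Mathlib

set_option autoImplicit false

open Matrix Set Filter

attribute [local instance] Matrix.normedAddCommGroup Matrix.normedSpace

namespace BoxSDP

open scoped Classical

/-- Trace inner product `⟨A|B⟩ = Trace(Aᵀ B)`. -/
noncomputable def mip {m k : Type*} [Fintype m] [Fintype k]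
    (A B : Matrix m k ℝ) : ℝ :=
  (Aᵀ * B).trace

/-- Frobenius norm `‖A‖_F = √⟨A|A⟩`. -/
noncomputable def fnorm {m k : Type*} [Fintype m] [Fintype k]
    (A : Matrix m k ℝ) : ℝ :=
  Real.sqrt (mip A A)

/-- The feasible set `F = {X : O ⪯ X ⪯ I}` (membership forces symmetry). -/
def Feas (n : ℕ) : Set (Matrix (Fin n) (Fin n) ℝ) :=
  {X | X.PosSemidef ∧ (1 - X).PosSemidef}

/-- Square root of a positive semidefinite matrix (junk value `0` otherwise);
agrees with `A^{1/2} = Q K^{1/2} Qᵀ` on positive semidefinite matrices. -/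
noncomputable def psqrt {m : Type*} [Fintype m] [DecidableEq m]
    (A : Matrix m m ℝ) : Matrix m m ℝ :=
  if h : A.PosSemidef then
    (h.1.eigenvectorUnitary : Matrix m m ℝ) * diagonal ((↑) ∘ Real.sqrt ∘ h.1.eigenvalues) *
      (star h.1.eigenvectorUnitary : Matrix m m ℝ) else 0

/-- Fourth root `A^{1/4}` of a positive semidefinite matrix. -/
noncomputable def proot4 {m : Type*} [Fintype m] [DecidableEq m]
    (A : Matrix m m ℝ) : Matrix m m ℝ :=
  psqrt (psqrt A)

/-- The 2-norm of a symmetric matrix: its largest absolute eigenvalue. -/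
noncomputable def norm2 {m : Type*} [Fintype m] [DecidableEq m]
    (A : Matrix m m ℝ) : ℝ :=
  if h : A.IsHermitian then sSup (Set.range fun i => |h.eigenvalues i|) else 0

/-- The linear functional `H ↦ ⟨G|H⟩`, as a continuous linear map; a function
`f` has gradient matrix `G` at `X` iff `HasFDerivAt f (gradCLM G) X`. -/
noncomputable def gradCLM {n : ℕ} (G : Matrix (Fin n) (Fin n) ℝ) :
    Matrix (Fin n) (Fin n) ℝ →L[ℝ] ℝ :=
  LinearMap.toContinuousLinearMap
    { toFun := fun H => mip G H
      map_add' := fun x y => by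
        simp [mip, Matrix.mul_add]
      map_smul' := fun c x => by
        simp [mip, Matrix.mul_smul] }

/-- The Hessian bilinear form `⟨A | ∇²f(X) | B⟩` induced by the derivative
`hessOp` of the gradient map. -/
noncomputable def hform {n : ℕ}
    (hessOp : Matrix (Fin n) (Fin n) ℝ →L[ℝ] Matrix (Fin n) (Fin n) ℝ)
    (A B : Matrix (Fin n) (Fin n) ℝ) : ℝ :=
  mip A (hessOp B)

/-- `underline-f`: the minimum of `⟨G | Y − X̂⟩` over `Y ∈ F`. -/
noncomputable def underf {n : ℕ} (G Xh : Matrix (Fin n) (Fin n) ℝ) : ℝ :=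
  sInf ((fun Y => mip G (Y - Xh)) '' Feas n)

/-- First-order optimality condition at `Xs` for gradient matrix `G`. -/
def FirstOrderOpt {n : ℕ} (G Xs : Matrix (Fin n) (Fin n) ℝ) : Prop :=
  ∀ X ∈ Feas n, 0 ≤ mip G (X - Xs)

/-- A fixed eigenvalue decomposition `G = P Γ Pᵀ` of a symmetric matrix `G`,
with eigenvalues in descending order, split into the block `Pp, gp` of
positive eigenvalues and the block `Pm, gm` of nonpositive eigenvalues. -/
structure SpecDecomp (n : ℕ) (G : Matrix (Fin n) (Fin n) ℝ) where
  np : ℕ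
  nm : ℕ
  hdim : np + nm = n
  Pp : Matrix (Fin n) (Fin np) ℝ
  Pm : Matrix (Fin n) (Fin nm) ℝ
  gp : Fin np → ℝ
  gm : Fin nm → ℝ
  hgp_pos : ∀ i, 0 < gp i
  hgm_nonpos : ∀ j, gm j ≤ 0
  hgp_anti : ∀ i j : Fin np, i ≤ j → gp j ≤ gp i
  hgm_anti : ∀ i j : Fin nm, i ≤ j → gm j ≤ gm i
  hPp_orth : Ppᵀ * Pp = 1
  hPm_orth : Pmᵀ * Pm = 1
  hPpPm : Ppᵀ * Pm = 0
  hPPT : Pp * Ppᵀ + Pm * Pmᵀ = 1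
  hG : G = Pp * Matrix.diagonal gp * Ppᵀ + Pm * Matrix.diagonal gm * Pmᵀ

namespace SpecDecomp

variable {n : ℕ} {G : Matrix (Fin n) (Fin n) ℝ}

/-- `V₊(X) = P₊ᵀ X P₊`. -/
def Vp (sd : SpecDecomp n G) (X : Matrix (Fin n) (Fin n) ℝ) :
    Matrix (Fin sd.np) (Fin sd.np) ℝ :=
  sd.Ppᵀ * X * sd.Pp

/-- `V₋(X) = P₋ᵀ (I − X) P₋`. -/
def Vm (sd : SpecDecomp n G) (X : Matrix (Fin n) (Fin n) ℝ) :
    Matrix (Fin sd.nm) (Fin sd.nm) ℝ :=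
  sd.Pmᵀ * (1 - X) * sd.Pm

/-- The search direction `D(X) = P M Pᵀ` with blocks
`M₁₁ = V₊^{1/2} Γ₊ V₊^{1/2}`, `M₁₂ = γ_max P₊ᵀ X P₋`,
`M₂₁ = γ_max P₋ᵀ X P₊`, `M₂₂ = V₋^{1/2} Γ₋ V₋^{1/2}`. -/
noncomputable def Dmat (sd : SpecDecomp n G) (X : Matrix (Fin n) (Fin n) ℝ) :
    Matrix (Fin n) (Fin n) ℝ :=
  sd.Pp * (psqrt (sd.Vp X) * Matrix.diagonal sd.gp * psqrt (sd.Vp X)) * sd.Ppᵀ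
    + norm2 G • (sd.Pp * (sd.Ppᵀ * X * sd.Pm) * sd.Pmᵀ)
    + norm2 G • (sd.Pm * (sd.Pmᵀ * X * sd.Pp) * sd.Ppᵀ)
    + sd.Pm * (psqrt (sd.Vm X) * Matrix.diagonal sd.gm * psqrt (sd.Vm X)) * sd.Pmᵀ

/-- `N(X) = ⟨G | D(X)⟩`. -/
noncomputable def Nval (sd : SpecDecomp n G) (X : Matrix (Fin n) (Fin n) ℝ) : ℝ :=
  mip G (sd.Dmat X)

end SpecDecomp

lemma transpose_eq_self_of_posSemidef {m : Type*} {A : Matrix m m ℝ} (hA : A.PosSemidef) : Aᵀ = A := by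
  simpa only [conjTranspose_eq_transpose_of_trivial] using hA.isHermitian.eq

section MatrixLemmas

variable {m k : Type*} [Fintype m] [Fintype k]

lemma mip_eq_sum (A B : Matrix m k ℝ) :
    mip A B = ∑ p : m × k, A p.1 p.2 * B p.1 p.2 := by
  rw [Fintype.sum_prod_type, mip, Matrix.trace, Finset.sum_comm]
  simp only [Matrix.diag, Matrix.mul_apply, Matrix.transpose_apply]

lemma mip_le_fnorm_mul_fnorm (A B : Matrix m k ℝ) : mip A B ≤ fnorm A * fnorm B := by
  simp only [fnorm, mip_eq_sum, ← sq]
  exact Real.sum_mul_le_sqrt_mul_sqrt _ _ _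

lemma fnorm_neg (A : Matrix m k ℝ) : fnorm (-A) = fnorm A := by
  simp [fnorm, mip]

lemma transpose_mul_mul_posSemidef {X : Matrix m m ℝ} (hX : X.PosSemidef) (P : Matrix m k ℝ) :
    (Pᵀ * X * P).PosSemidef := by
  simpa only [conjTranspose_eq_transpose_of_trivial] using hX.conjTranspose_mul_mul_same P

lemma posSemidef_and_one_sub_transpose_mul_mul [DecidableEq m] [DecidableEq k]
    {X : Matrix m m ℝ} (hX : X.PosSemidef) (hX1 : (1 - X).PosSemidef)
    {P : Matrix m k ℝ} (hP : Pᵀ * P = 1) :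
    (Pᵀ * X * P).PosSemidef ∧ (1 - Pᵀ * X * P).PosSemidef := by
  refine ⟨transpose_mul_mul_posSemidef hX P, ?_⟩
  have h : 1 - Pᵀ * X * P = Pᵀ * (1 - X) * P := by
    rw [Matrix.mul_sub, Matrix.sub_mul, Matrix.mul_one, hP]
  exact h ▸ transpose_mul_mul_posSemidef hX1 P

lemma trace_le_card_of_one_sub_posSemidef [DecidableEq m] {V : Matrix m m ℝ}
    (hV1 : (1 - V).PosSemidef) : V.trace ≤ Fintype.card m := by
  have hdiag : ∀ i, V i i ≤ 1 := fun i => by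
    simpa [Matrix.sub_apply] using hV1.diag_nonneg (i := i)
  calc V.trace = ∑ i, V i i := rfl
    _ ≤ ∑ _i : m, 1 := Finset.sum_le_sum fun i _ => hdiag i
    _ = Fintype.card m := by simp

end MatrixLemmas

section Sqrt

variable {m : Type*} [Fintype m] [DecidableEq m]

lemma psqrt_posSemidef {A : Matrix m m ℝ} (hA : A.PosSemidef) : (psqrt A).PosSemidef := by
  rw [psqrt, dif_pos hA]
  exact (PosSemidef.diagonal fun i => by simp).mul_mul_conjTranspose_same _

lemma psqrt_mul_self {A : Matrix m m ℝ} (hA : A.PosSemidef) : psqrt A * psqrt A = A := by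
  rw [psqrt, dif_pos hA]
  set U : Matrix m m ℝ := (hA.1.eigenvectorUnitary : Matrix m m ℝ)
  set S : Matrix m m ℝ := diagonal ((↑) ∘ Real.sqrt ∘ hA.1.eigenvalues)
  have hU : star U * U = 1 := hA.1.eigenvectorUnitary.2.1
  have hSS : S * S = diagonal (RCLike.ofReal ∘ hA.1.eigenvalues : m → ℝ) := by
    rw [diagonal_mul_diagonal]
    congr 1
    funext i
    simpa using Real.mul_self_sqrt (hA.eigenvalues_nonneg i)
  calc U * S * star U * (U * S * star U) = U * (S * (star U * U) * S) * star U := by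
        simp only [Matrix.mul_assoc]
    _ = A := by
        rw [hU, Matrix.mul_one, hSS]
        conv_rhs => rw [hA.1.spectral_theorem]
        simp [U, Unitary.conjStarAlgAut_apply]

/-- With `W = V^{1/2}` and `R = V^{1/4}`, cyclicity of the trace gives
`⟨Γ | V⟩ = ⟨RΓR | W⟩`, and Cauchy–Schwarz bounds this by `‖RΓR‖_F ‖W‖_F`,
where `‖W‖_F² = Trace V ≤ card m`. -/
lemma mip_diagonal_le_card_mul_fnorm (g : m → ℝ) {V : Matrix m m ℝ}
    (hV : V.PosSemidef) (hV1 : (1 - V).PosSemidef) :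
    mip (diagonal g) V ≤ Fintype.card m * fnorm (proot4 V * diagonal g * proot4 V) := by
  set W := psqrt V
  set R := proot4 V
  have hW : W.PosSemidef := psqrt_posSemidef hV
  have hWW : W * W = V := psqrt_mul_self hV
  have hRR : R * R = W := psqrt_mul_self hW
  have hRT : Rᵀ = R := transpose_eq_self_of_posSemidef (psqrt_posSemidef hW)
  set B := R * diagonal g * R
  have hmip : mip (diagonal g) V = mip B W := by
    have hRWR : R * W * R = V := by rw [← hWW, ← hRR]; simp only [Matrix.mul_assoc]
    rw [mip, mip, diagonal_transpose, ← hRWR, Matrix.transpose_mul, Matrix.transpose_mul, hRT,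
      diagonal_transpose, Matrix.mul_assoc, Matrix.mul_assoc, Matrix.trace_mul_comm R]
    simp only [Matrix.mul_assoc]
  have hfW : fnorm W ≤ Fintype.card m := by
    rw [fnorm, mip, transpose_eq_self_of_posSemidef hW, hWW, Real.sqrt_le_left (by positivity)]
    have hcard : (Fintype.card m : ℝ) ≤ (Fintype.card m : ℝ) ^ 2 := by
      exact_mod_cast Nat.le_self_pow two_ne_zero _
    exact (trace_le_card_of_one_sub_posSemidef hV1).trans hcard
  calc mip (diagonal g) V = mip B W := hmip
    _ ≤ fnorm B * fnorm W := mip_le_fnorm_mul_fnorm B W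
    _ ≤ fnorm B * Fintype.card m := mul_le_mul_of_nonneg_left hfW (Real.sqrt_nonneg _)
    _ = Fintype.card m * fnorm B := mul_comm _ _

end Sqrt

namespace SpecDecomp

variable {n : ℕ} {G X : Matrix (Fin n) (Fin n) ℝ} (sd : SpecDecomp n G)

lemma Vp_posSemidef_and_one_sub (hX : X ∈ Feas n) :
    (sd.Vp X).PosSemidef ∧ (1 - sd.Vp X).PosSemidef :=
  posSemidef_and_one_sub_transpose_mul_mul hX.1 hX.2 sd.hPp_orth

lemma Vm_posSemidef_and_one_sub (hX : X ∈ Feas n) :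
    (sd.Vm X).PosSemidef ∧ (1 - sd.Vm X).PosSemidef :=
  posSemidef_and_one_sub_transpose_mul_mul hX.2 (by simpa using hX.1) sd.hPm_orth

end SpecDecomp

theorem inner_gamma_V_le_general {n : ℕ}
    (grad : Matrix (Fin n) (Fin n) ℝ → Matrix (Fin n) (Fin n) ℝ)
    (X : Matrix (Fin n) (Fin n) ℝ) (hX : X ∈ Feas n)
    (sd : SpecDecomp n (grad X)) :
    mip (Matrix.diagonal sd.gp) (sd.Vp X) ≤
      (sd.np : ℝ) * fnorm (proot4 (sd.Vp X) * Matrix.diagonal sd.gp * proot4 (sd.Vp X)) ∧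
    mip (-(Matrix.diagonal sd.gm)) (sd.Vm X) ≤
      (sd.nm : ℝ) * fnorm (proot4 (sd.Vm X) * Matrix.diagonal sd.gm * proot4 (sd.Vm X)) := by
  obtain ⟨hVp, hVp1⟩ := sd.Vp_posSemidef_and_one_sub hX
  obtain ⟨hVm, hVm1⟩ := sd.Vm_posSemidef_and_one_sub hX
  constructor
  · simpa using mip_diagonal_le_card_mul_fnorm sd.gp hVp hVp1
  · have h := mip_diagonal_le_card_mul_fnorm (fun i => -sd.gm i) hVm hVm1
    rwa [← diagonal_neg, Matrix.mul_neg, Matrix.neg_mul, fnorm_neg, Fintype.card_fin] at h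

theorem inner_gamma_V_le {n : ℕ}
    (f : Matrix (Fin n) (Fin n) ℝ → ℝ)
    (grad : Matrix (Fin n) (Fin n) ℝ → Matrix (Fin n) (Fin n) ℝ)
    (hgradsym : ∀ X ∈ Feas n, (grad X).IsSymm)
    (hgrad : ∀ X ∈ Feas n, HasFDerivAt f (gradCLM (grad X)) X)
    (X : Matrix (Fin n) (Fin n) ℝ) (hX : X ∈ Feas n)
    (sd : SpecDecomp n (grad X)) :
    mip (Matrix.diagonal sd.gp) (sd.Vp X) ≤
      (sd.np : ℝ) * fnorm (proot4 (sd.Vp X) * Matrix.diagonal sd.gp * proot4 (sd.Vp X)) ∧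
    mip (-(Matrix.diagonal sd.gm)) (sd.Vm X) ≤
      (sd.nm : ℝ) * fnorm (proot4 (sd.Vm X) * Matrix.diagonal sd.gm * proot4 (sd.Vm X)) :=
  inner_gamma_V_le_general grad X hX sd

end BoxSDP
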